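/- The time averages of every positive solution of the scaled KtW system converge to the positive equilibrium: lim_{t→∞} (1/t)∫_0^t X(s) ds = X* for each component X ∈ {H_1,...,H_n, P_1,...,P_{n−1}, Z}, assuming conditions w < r_n < r_j (j < n) and Σ_{i<n} e_i < q < r_n − w hold. -/

import Mathlib

open MeasureTheory Filter

lemma phi_min_aux {a x : ℝ} (ha : 0 < a) (hx : 0 < x) :
    a - a * Real.log a ≤ x - a * Real.log x := by
  have h := Real.log_le_sub_one_of_pos (show 0 < x / a by positivity)
  rw [Real.log_div (ne_of_gt hx) (ne_of_gt ha)] at h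
  have h2 := mul_le_mul_of_nonneg_left h ha.le
  have e1 : a * (x/a - 1) = x - a := by field_simp
  rw [mul_sub, e1] at h2
  nlinarith

lemma phi_half_aux {a x : ℝ} (ha : 0 < a) (hx : 0 < x) :
    x/2 + (a - a * Real.log (2*a)) ≤ x - a * Real.log x := by
  have h := Real.log_le_sub_one_of_pos (show 0 < x / (2*a) by positivity)
  rw [Real.log_div (ne_of_gt hx) (by positivity)] at h
  have h2 := mul_le_mul_of_nonneg_left h ha.le
  have e1 : a * (x/(2*a) - 1) = x/2 - a := by field_simp
  rw [mul_sub, ← mul_sub, e1] at h2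
  nlinarith

lemma log_abs_bound_aux {a x C : ℝ} (ha : 0 < a) (hx : 0 < x)
    (h : x - a * Real.log x ≤ C) :
    |Real.log x| ≤ max (C/a) (2*(C - a + a * Real.log (2*a)) - 1) := by
  have hlow : -(C/a) ≤ Real.log x := by
    have h3 : (x - C)/a ≤ Real.log x := (div_le_iff₀' ha).mpr (by linarith)
    have h4 : -(C/a) ≤ (x - C)/a := by
      rw [← neg_div]
      gcongr
      linarith
    exact h4.trans h3
  have hupx : x ≤ 2*(C - a + a * Real.log (2*a)) := by
    have := phi_half_aux ha hx
    linarith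
  have hup : Real.log x ≤ 2*(C - a + a * Real.log (2*a)) - 1 := by
    have := Real.log_le_sub_one_of_pos hx
    linarith
  rw [abs_le]
  exact ⟨le_trans (neg_le_neg (le_max_left _ _)) hlow, hup.trans (le_max_right _ _)⟩

lemma abs_sub_le_abs_add_abs (a b : ℝ) : |a - b| ≤ |a| + |b| := by
  rw [sub_eq_add_neg]
  exact (abs_add_le _ _).trans (by rw [abs_neg])

lemma avg_tendsto_aux {f g : ℝ → ℝ} {L B : ℝ}
    (hfg : ∀ t, 0 ≤ t → f t = L * t + g t) (hg : ∀ t, 0 ≤ t → |g t| ≤ B) :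
    Filter.Tendsto (fun t => (1/t) * f t) Filter.atTop (nhds L) := by
  have h0 : Filter.Tendsto (fun t : ℝ => g t / t) Filter.atTop (nhds 0) := by
    have hbnd : ∀ᶠ t in Filter.atTop, ‖g t / t‖ ≤ B * (1/t) := by
      filter_upwards [Filter.eventually_ge_atTop (1:ℝ)] with t ht
      have ht0 : (0:ℝ) < t := by linarith
      rw [Real.norm_eq_abs, abs_div, abs_of_pos ht0, div_le_iff₀ ht0]
      calc |g t| ≤ B := hg t ht0.le
        _ = B * (1/t) * t := by field_simp
    have hB0 : Filter.Tendsto (fun t : ℝ => B * (1/t)) Filter.atTop (nhds 0) := by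
      have : Filter.Tendsto (fun t : ℝ => (1:ℝ)/t) Filter.atTop (nhds 0) := by
        simpa using tendsto_inv_atTop_zero (𝕜 := ℝ)
      simpa using this.const_mul B
    exact squeeze_zero_norm' hbnd hB0
  have h1 : Filter.Tendsto (fun t : ℝ => L + g t / t) Filter.atTop (nhds (L + 0)) :=
    tendsto_const_nhds.add h0
  rw [add_zero] at h1
  apply h1.congr'
  filter_upwards [Filter.eventually_ge_atTop (1:ℝ)] with t ht
  have ht0 : (0:ℝ) < t := by linarith
  rw [hfg t ht0.le]
  field_simp

lemma log_ftc_aux {X G : ℝ → ℝ} (hpos : ∀ s, 0 ≤ s → 0 < X s)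
    (hd : ∀ s, 0 ≤ s → HasDerivAt X (X s * G s) s)
    (hGc : ∀ s, 0 ≤ s → ContinuousAt G s)
    {t : ℝ} (ht : 0 ≤ t) :
    Real.log (X t) - Real.log (X 0) = ∫ s in (0:ℝ)..t, G s := by
  have huIcc : Set.uIcc (0:ℝ) t = Set.Icc 0 t := Set.uIcc_of_le ht
  refine (intervalIntegral.integral_eq_sub_of_hasDerivAt
    (f := fun u => Real.log (X u)) (f' := G) ?_ ?_).symm
  · intro s hs
    rw [huIcc] at hs
    have hs0 : (0:ℝ) ≤ s := hs.1
    have hXpos := hpos s hs0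
    have hlog := (hd s hs0).log (ne_of_gt hXpos)
    have e1 : X s * G s / X s = G s := by field_simp
    rwa [e1] at hlog
  · apply ContinuousOn.intervalIntegrable
    intro s hs
    rw [huIcc] at hs
    exact (hGc s hs.1).continuousWithinAt

theorem ktw_time_averages_converge
    (m : ℕ) (hm : 0 < m) (r : Fin (m+1) → ℝ) (w : ℝ) (ν e : Fin m → ℝ) (lam q : ℝ)
    (hr : ∀ i, 0 < r i) (hw : 0 < w) (hν : ∀ i, 0 < ν i) (he : ∀ i, 0 < e i)
    (hlam : 0 < lam) (hq : 0 < q)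
    -- existence conditions for the positive equilibrium
    (hc1 : w < r (Fin.last m)) (hc2 : ∀ i : Fin m, r (Fin.last m) < r i.castSucc)
    (hc3 : ∑ i, e i < q) (hc4 : q < r (Fin.last m) - w)
    -- a positive solution
    (H : Fin (m+1) → ℝ → ℝ) (P : Fin m → ℝ → ℝ) (Z : ℝ → ℝ)
    (hH : ∀ i : Fin m, ∀ t ∈ Set.Ici (0:ℝ), HasDerivAt (H i.castSucc)
      (H i.castSucc t * (r i.castSucc - w - ∑ j, H j t)
        - H i.castSucc t * P i t - H i.castSucc t * Z t) t)
    (hHn : ∀ t ∈ Set.Ici (0:ℝ), HasDerivAt (H (Fin.last m))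
      (H (Fin.last m) t * (r (Fin.last m) - w - ∑ j, H j t) - H (Fin.last m) t * Z t) t)
    (hPode : ∀ i : Fin m, ∀ t ∈ Set.Ici (0:ℝ), HasDerivAt (P i)
      (ν i * P i t * (H i.castSucc t - e i)) t)
    (hZode : ∀ t ∈ Set.Ici (0:ℝ), HasDerivAt Z (lam * Z t * (∑ j, H j t - q)) t)
    (hpos : ∀ t ∈ Set.Ici (0:ℝ), (∀ i, 0 < H i t) ∧ (∀ j, 0 < P j t) ∧ 0 < Z t) :
    (∀ i : Fin m, Filter.Tendsto (fun t => (1 / t) * ∫ s in (0:ℝ)..t, H i.castSucc s)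
        Filter.atTop (nhds (e i))) ∧
    (∀ i : Fin m, Filter.Tendsto (fun t => (1 / t) * ∫ s in (0:ℝ)..t, P i s)
        Filter.atTop (nhds (r i.castSucc - r (Fin.last m)))) ∧
    Filter.Tendsto (fun t => (1 / t) * ∫ s in (0:ℝ)..t, H (Fin.last m) s)
        Filter.atTop (nhds (q - ∑ i, e i)) ∧
    Filter.Tendsto (fun t => (1 / t) * ∫ s in (0:ℝ)..t, Z s)
        Filter.atTop (nhds (r (Fin.last m) - w - q)) := by
  -- positivity shortcuts
  have hHpos : ∀ j, ∀ t, (0:ℝ) ≤ t → 0 < H j t := fun j t ht => ((hpos t ht).1 j)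
  have hPpos : ∀ i, ∀ t, (0:ℝ) ≤ t → 0 < P i t := fun i t ht => ((hpos t ht).2.1 i)
  have hZpos : ∀ t, (0:ℝ) ≤ t → 0 < Z t := fun t ht => (hpos t ht).2.2
  -- equilibrium values
  obtain ⟨zst, hzst⟩ : ∃ zst : ℝ, zst = r (Fin.last m) - w - q := ⟨_, rfl⟩
  obtain ⟨pst, hpst⟩ : ∃ pst : Fin m → ℝ, pst = fun i => r i.castSucc - r (Fin.last m) :=
    ⟨_, rfl⟩
  obtain ⟨hnst, hhnst⟩ : ∃ hnst : ℝ, hnst = q - ∑ i, e i := ⟨_, rfl⟩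
  have hzst_pos : 0 < zst := by rw [hzst]; linarith
  have hpst_pos : ∀ i, 0 < pst i := by intro i; rw [hpst]; simp; linarith [hc2 i]
  have hhnst_pos : 0 < hnst := by rw [hhnst]; linarith
  -- continuity
  have hHcont : ∀ j : Fin (m+1), ∀ s, (0:ℝ) ≤ s → ContinuousAt (H j) s := by
    intro j
    induction j using Fin.lastCases with
    | last => exact fun s hs => (hHn s hs).continuousAt
    | cast i => exact fun s hs => (hH i s hs).continuousAt
  have hPcont : ∀ i, ∀ s, (0:ℝ) ≤ s → ContinuousAt (P i) s :=
    fun i s hs => (hPode i s hs).continuousAt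
  have hZcont : ∀ s, (0:ℝ) ≤ s → ContinuousAt Z s := fun s hs => (hZode s hs).continuousAt
  have hHscont : ∀ s, (0:ℝ) ≤ s → ContinuousAt (fun u => ∑ j, H j u) s := by
    intro s hs
    have hda : ∀ j : Fin (m+1), ∃ d, HasDerivAt (H j) d s := by
      intro j
      induction j using Fin.lastCases with
      | last => exact ⟨_, hHn s hs⟩
      | cast i => exact ⟨_, hH i s hs⟩
    exact (HasDerivAt.fun_sum (fun j _ => (hda j).choose_spec)).continuousAt
  -- integrability
  have hint : ∀ (F : ℝ → ℝ), (∀ s, (0:ℝ) ≤ s → ContinuousAt F s) → ∀ t, (0:ℝ) ≤ t →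
      IntervalIntegrable F volume 0 t := by
    intro F hF t ht
    apply ContinuousOn.intervalIntegrable
    intro s hs
    rw [Set.uIcc_of_le ht] at hs
    exact (hF s hs.1).continuousWithinAt
  -- FTC identity: average of H_i in terms of log P_i
  have hIP : ∀ i : Fin m, ∀ t, (0:ℝ) ≤ t →
      (∫ s in (0:ℝ)..t, H i.castSucc s) = e i * t
        + (Real.log (P i t) - Real.log (P i 0)) / ν i := by
    intro i t ht
    have hd : ∀ s, (0:ℝ) ≤ s →
        HasDerivAt (P i) (P i s * (ν i * (H i.castSucc s - e i))) s := by
      intro s hs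
      have h := hPode i s hs
      have e1 : ν i * P i s * (H i.castSucc s - e i)
          = P i s * (ν i * (H i.castSucc s - e i)) := by ring
      rwa [e1] at h
    have hGc : ∀ s, (0:ℝ) ≤ s → ContinuousAt (fun u => ν i * (H i.castSucc u - e i)) s :=
      fun s hs => continuousAt_const.mul ((hHcont _ s hs).sub continuousAt_const)
    have h := log_ftc_aux (hPpos i) hd hGc ht
    rw [intervalIntegral.integral_const_mul,
      intervalIntegral.integral_sub (hint _ (hHcont _) t ht) intervalIntegrable_const,
      intervalIntegral.integral_const] at h
    rw [h]
    have hν0 : ν i ≠ 0 := (hν i).ne'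
    simp only [smul_eq_mul, sub_zero]
    field_simp
    ring
  -- FTC identity: average of total H in terms of log Z
  have hIHs : ∀ t, (0:ℝ) ≤ t →
      (∫ s in (0:ℝ)..t, ∑ j, H j s) = q * t
        + (Real.log (Z t) - Real.log (Z 0)) / lam := by
    intro t ht
    have hd : ∀ s, (0:ℝ) ≤ s →
        HasDerivAt Z (Z s * (lam * ((∑ j, H j s) - q))) s := by
      intro s hs
      have h := hZode s hs
      have e1 : lam * Z s * ((∑ j, H j s) - q) = Z s * (lam * ((∑ j, H j s) - q)) := by ring
      rwa [e1] at h
    have hGc : ∀ s, (0:ℝ) ≤ s → ContinuousAt (fun u => lam * ((∑ j, H j u) - q)) s :=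
      fun s hs => continuousAt_const.mul ((hHscont s hs).sub continuousAt_const)
    have h := log_ftc_aux hZpos hd hGc ht
    rw [intervalIntegral.integral_const_mul,
      intervalIntegral.integral_sub (hint _ hHscont t ht) intervalIntegrable_const,
      intervalIntegral.integral_const] at h
    rw [h]
    have hl0 : lam ≠ 0 := hlam.ne'
    simp only [smul_eq_mul, sub_zero]
    field_simp
    ring
  -- FTC identity for Z via log H_n
  have hIZ : ∀ t, (0:ℝ) ≤ t →
      (∫ s in (0:ℝ)..t, Z s) = (r (Fin.last m) - w) * t - (∫ s in (0:ℝ)..t, ∑ j, H j s)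
        - (Real.log (H (Fin.last m) t) - Real.log (H (Fin.last m) 0)) := by
    intro t ht
    have hd : ∀ s, (0:ℝ) ≤ s → HasDerivAt (H (Fin.last m))
        (H (Fin.last m) s * (r (Fin.last m) - w - (∑ j, H j s) - Z s)) s := by
      intro s hs
      have h := hHn s hs
      have e1 : H (Fin.last m) s * (r (Fin.last m) - w - ∑ j, H j s)
          - H (Fin.last m) s * Z s
          = H (Fin.last m) s * (r (Fin.last m) - w - (∑ j, H j s) - Z s) := by ring
      rwa [e1] at h
    have hGc : ∀ s, (0:ℝ) ≤ s →
        ContinuousAt (fun u => r (Fin.last m) - w - (∑ j, H j u) - Z u) s :=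
      fun s hs => ((continuousAt_const.sub (hHscont s hs))).sub (hZcont s hs)
    have h := log_ftc_aux (hHpos (Fin.last m)) hd hGc ht
    rw [intervalIntegral.integral_sub
        ((intervalIntegrable_const).sub (hint _ hHscont t ht)) (hint _ hZcont t ht),
      intervalIntegral.integral_sub (intervalIntegrable_const) (hint _ hHscont t ht),
      intervalIntegral.integral_const] at h
    simp only [smul_eq_mul, sub_zero] at h
    linarith
  -- FTC identity for P_i via log H_i
  have hIP2 : ∀ i : Fin m, ∀ t, (0:ℝ) ≤ t →
      (∫ s in (0:ℝ)..t, P i s) = (r i.castSucc - w) * t - (∫ s in (0:ℝ)..t, ∑ j, H j s)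
        - (∫ s in (0:ℝ)..t, Z s)
        - (Real.log (H i.castSucc t) - Real.log (H i.castSucc 0)) := by
    intro i t ht
    have hd : ∀ s, (0:ℝ) ≤ s → HasDerivAt (H i.castSucc)
        (H i.castSucc s * (r i.castSucc - w - (∑ j, H j s) - P i s - Z s)) s := by
      intro s hs
      have h := hH i s hs
      have e1 : H i.castSucc s * (r i.castSucc - w - ∑ j, H j s)
          - H i.castSucc s * P i s - H i.castSucc s * Z s
          = H i.castSucc s * (r i.castSucc - w - (∑ j, H j s) - P i s - Z s) := by ring
      rwa [e1] at h
    have hGc : ∀ s, (0:ℝ) ≤ s →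
        ContinuousAt (fun u => r i.castSucc - w - (∑ j, H j u) - P i u - Z u) s :=
      fun s hs => (((continuousAt_const.sub (hHscont s hs))).sub (hPcont i s hs)).sub
        (hZcont s hs)
    have h := log_ftc_aux (hHpos i.castSucc) hd hGc ht
    rw [intervalIntegral.integral_sub
        (((intervalIntegrable_const).sub (hint _ hHscont t ht)).sub (hint _ (hPcont i) t ht))
        (hint _ hZcont t ht),
      intervalIntegral.integral_sub
        ((intervalIntegrable_const).sub (hint _ hHscont t ht)) (hint _ (hPcont i) t ht),
      intervalIntegral.integral_sub (intervalIntegrable_const) (hint _ hHscont t ht),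
      intervalIntegral.integral_const] at h
    simp only [smul_eq_mul, sub_zero] at h
    linarith
  -- splitting the total integral
  have hsplit : ∀ t, (0:ℝ) ≤ t →
      (∫ s in (0:ℝ)..t, ∑ j, H j s)
        = (∑ i : Fin m, ∫ s in (0:ℝ)..t, H i.castSucc s)
          + ∫ s in (0:ℝ)..t, H (Fin.last m) s := by
    intro t ht
    rw [intervalIntegral.integral_finset_sum (fun j _ => hint _ (hHcont j) t ht)]
    exact Fin.sum_univ_castSucc (f := fun j => ∫ s in (0:ℝ)..t, H j s)
  -- Lyapunov function
  obtain ⟨V, hV⟩ : ∃ V : ℝ → ℝ, V = fun t =>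
      (∑ i : Fin m, ((H i.castSucc t - e i * Real.log (H i.castSucc t))
        + (1/ν i) * (P i t - pst i * Real.log (P i t))))
      + (H (Fin.last m) t - hnst * Real.log (H (Fin.last m) t))
      + (1/lam) * (Z t - zst * Real.log (Z t)) := ⟨_, rfl⟩
  have hVd : ∀ t, (0:ℝ) ≤ t → HasDerivAt V (-(((∑ j, H j t) - q)^2)) t := by
    intro t ht
    rw [hV]
    have hterm : ∀ i : Fin m, HasDerivAt
        (fun u => (H i.castSucc u - e i * Real.log (H i.castSucc u))
          + (1/ν i) * (P i u - pst i * Real.log (P i u)))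
        ((H i.castSucc t - e i) * ((q - ∑ j, H j t) + (zst - Z t))) t := by
      intro i
      have hHne : H i.castSucc t ≠ 0 := (hHpos _ t ht).ne'
      have hPne : P i t ≠ 0 := (hPpos i t ht).ne'
      have hνne : ν i ≠ 0 := (hν i).ne'
      have dH := hH i t ht
      have d1 := dH.sub ((dH.log hHne).const_mul (e i))
      have dP := hPode i t ht
      have d2 := (dP.sub ((dP.log hPne).const_mul (pst i))).const_mul (1/ν i)
      have d3 := d1.add d2
      convert d3 using 1
      case e'_4 => rfl
      case e'_5 => rfl
      case e'_8 => rfl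
      rw [hpst, hzst]
      field_simp
      ring
    have hsum := HasDerivAt.sum (fun i (_ : i ∈ Finset.univ) => hterm i)
    have hHne : H (Fin.last m) t ≠ 0 := (hHpos _ t ht).ne'
    have hZne : Z t ≠ 0 := (hZpos t ht).ne'
    have dN := hHn t ht
    have d4 := dN.sub ((dN.log hHne).const_mul hnst)
    have dZ := hZode t ht
    have d5 := (dZ.sub ((dZ.log hZne).const_mul zst)).const_mul (1/lam)
    have total := (hsum.add d4).add d5
    convert total using 1
    case e'_4 => rfl
    case e'_5 => rfl
    case e'_8 =>
      funext u
      simp only [Finset.sum_apply, Pi.add_apply, Pi.sub_apply]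
    rw [← Finset.sum_mul, Finset.sum_sub_distrib, hhnst, hzst]
    rw [Fin.sum_univ_castSucc (f := fun j => H j t)]
    field_simp
    ring
  -- V is non-increasing
  have hVle : ∀ t, (0:ℝ) ≤ t → V t ≤ V 0 := by
    have hanti : AntitoneOn V (Set.Ici 0) := by
      apply antitoneOn_of_deriv_nonpos (convex_Ici 0)
      · exact fun s hs => ((hVd s hs).continuousAt).continuousWithinAt
      · intro s hs
        rw [interior_Ici] at hs
        exact (hVd s (le_of_lt hs)).differentiableAt.differentiableWithinAt
      · intro s hs
        rw [interior_Ici] at hs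
        rw [(hVd s (le_of_lt hs)).deriv]
        exact neg_nonpos.mpr (sq_nonneg _)
    exact fun t ht => hanti Set.self_mem_Ici ht ht
  -- minimum value of V terms
  obtain ⟨Vmin, hVminDef⟩ : ∃ Vmin : ℝ, Vmin = (∑ i : Fin m, ((e i - e i * Real.log (e i))
      + (1/ν i) * (pst i - pst i * Real.log (pst i))))
    + (hnst - hnst * Real.log hnst) + (1/lam) * (zst - zst * Real.log zst) := ⟨_, rfl⟩
  have hdecomp : ∀ t, (0:ℝ) ≤ t → V t - Vmin =
      (∑ i : Fin m, (((H i.castSucc t - e i * Real.log (H i.castSucc t))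
          + (1/ν i) * (P i t - pst i * Real.log (P i t)))
        - ((e i - e i * Real.log (e i))
          + (1/ν i) * (pst i - pst i * Real.log (pst i)))))
      + ((H (Fin.last m) t - hnst * Real.log (H (Fin.last m) t))
        - (hnst - hnst * Real.log hnst))
      + ((1/lam) * (Z t - zst * Real.log (Z t)) - (1/lam) * (zst - zst * Real.log zst)) := by
    intro t ht
    simp only [hV, hVminDef]
    rw [Finset.sum_sub_distrib]
    ring
  have hpieceN : ∀ t, (0:ℝ) ≤ t → 0 ≤ (H (Fin.last m) t - hnst * Real.log (H (Fin.last m) t))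
      - (hnst - hnst * Real.log hnst) := by
    intro t ht
    linarith [phi_min_aux hhnst_pos (hHpos (Fin.last m) t ht)]
  have hpieceZ : ∀ t, (0:ℝ) ≤ t → 0 ≤ (1/lam) * (Z t - zst * Real.log (Z t))
      - (1/lam) * (zst - zst * Real.log zst) := by
    intro t ht
    have h2 := phi_min_aux hzst_pos (hZpos t ht)
    have h3 := mul_le_mul_of_nonneg_left h2 (le_of_lt (one_div_pos.mpr hlam))
    linarith
  have hpieceH : ∀ t, (0:ℝ) ≤ t → ∀ i : Fin m,
      0 ≤ (H i.castSucc t - e i * Real.log (H i.castSucc t))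
        - (e i - e i * Real.log (e i)) := by
    intro t ht i
    linarith [phi_min_aux (he i) (hHpos i.castSucc t ht)]
  have hpieceP : ∀ t, (0:ℝ) ≤ t → ∀ i : Fin m,
      0 ≤ (1/ν i) * (P i t - pst i * Real.log (P i t))
        - (1/ν i) * (pst i - pst i * Real.log (pst i)) := by
    intro t ht i
    have h2 := phi_min_aux (hpst_pos i) (hPpos i t ht)
    have h3 := mul_le_mul_of_nonneg_left h2 (le_of_lt (one_div_pos.mpr (hν i)))
    linarith
  have hsummand : ∀ t, (0:ℝ) ≤ t → ∀ i : Fin m,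
      0 ≤ ((H i.castSucc t - e i * Real.log (H i.castSucc t))
          + (1/ν i) * (P i t - pst i * Real.log (P i t)))
        - ((e i - e i * Real.log (e i))
          + (1/ν i) * (pst i - pst i * Real.log (pst i))) := by
    intro t ht i
    have := hpieceH t ht i
    have := hpieceP t ht i
    linarith
  have hsumge : ∀ t, (0:ℝ) ≤ t → ∀ i : Fin m,
      ((H i.castSucc t - e i * Real.log (H i.castSucc t))
          + (1/ν i) * (P i t - pst i * Real.log (P i t)))
        - ((e i - e i * Real.log (e i))
          + (1/ν i) * (pst i - pst i * Real.log (pst i)))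
      ≤ ∑ k : Fin m, (((H k.castSucc t - e k * Real.log (H k.castSucc t))
          + (1/ν k) * (P k t - pst k * Real.log (P k t)))
        - ((e k - e k * Real.log (e k))
          + (1/ν k) * (pst k - pst k * Real.log (pst k)))) := by
    intro t ht i
    exact Finset.single_le_sum (fun k _ => hsummand t ht k) (Finset.mem_univ i)
  have hsumnonneg : ∀ t, (0:ℝ) ≤ t →
      0 ≤ ∑ k : Fin m, (((H k.castSucc t - e k * Real.log (H k.castSucc t))
          + (1/ν k) * (P k t - pst k * Real.log (P k t)))
        - ((e k - e k * Real.log (e k))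
          + (1/ν k) * (pst k - pst k * Real.log (pst k)))) := by
    intro t ht
    exact Finset.sum_nonneg (fun k _ => hsummand t ht k)
  -- upper bounds on the Lyapunov summands of each component
  have hboundHi : ∀ i : Fin m, ∀ t, (0:ℝ) ≤ t →
      H i.castSucc t - e i * Real.log (H i.castSucc t)
        ≤ (V 0 - Vmin) + (e i - e i * Real.log (e i)) := by
    intro i t ht
    have h1 := hdecomp t ht
    have h2 := hsumge t ht i
    have h3 := hpieceN t ht
    have h4 := hpieceZ t ht
    have h5 := hpieceP t ht i
    have h6 := hVle t ht
    have key : ((H i.castSucc t - e i * Real.log (H i.castSucc t))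
          + (1/ν i) * (P i t - pst i * Real.log (P i t)))
        - ((e i - e i * Real.log (e i))
          + (1/ν i) * (pst i - pst i * Real.log (pst i))) ≤ V 0 - Vmin := by
      refine h2.trans ?_
      calc (∑ k : Fin m, (((H k.castSucc t - e k * Real.log (H k.castSucc t))
              + (1/ν k) * (P k t - pst k * Real.log (P k t)))
            - ((e k - e k * Real.log (e k))
              + (1/ν k) * (pst k - pst k * Real.log (pst k)))))
          ≤ (∑ k : Fin m, (((H k.castSucc t - e k * Real.log (H k.castSucc t))
              + (1/ν k) * (P k t - pst k * Real.log (P k t)))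
            - ((e k - e k * Real.log (e k))
              + (1/ν k) * (pst k - pst k * Real.log (pst k)))))
            + ((H (Fin.last m) t - hnst * Real.log (H (Fin.last m) t))
              - (hnst - hnst * Real.log hnst))
            + ((1/lam) * (Z t - zst * Real.log (Z t))
              - (1/lam) * (zst - zst * Real.log zst)) := by linarith [h3, h4]
        _ = V t - Vmin := h1.symm
        _ ≤ V 0 - Vmin := by linarith [h6]
    linarith [key, h5]
  have hboundPi : ∀ i : Fin m, ∀ t, (0:ℝ) ≤ t →
      P i t - pst i * Real.log (P i t)
        ≤ ν i * (V 0 - Vmin) + (pst i - pst i * Real.log (pst i)) := by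
    intro i t ht
    have h1 := hdecomp t ht
    have h2 := hsumge t ht i
    have h3 := hpieceN t ht
    have h4 := hpieceZ t ht
    have h5 := hpieceH t ht i
    have h6 := hVle t ht
    have key : ((H i.castSucc t - e i * Real.log (H i.castSucc t))
          + (1/ν i) * (P i t - pst i * Real.log (P i t)))
        - ((e i - e i * Real.log (e i))
          + (1/ν i) * (pst i - pst i * Real.log (pst i))) ≤ V 0 - Vmin := by
      refine h2.trans ?_
      linarith [h3, h4, h6, h1]
    have hb : (1/ν i) * (P i t - pst i * Real.log (P i t))
        ≤ (V 0 - Vmin) + (1/ν i) * (pst i - pst i * Real.log (pst i)) := by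
      linarith [key, h5]
    have h8 := mul_le_mul_of_nonneg_left hb (hν i).le
    have hνne : ν i ≠ 0 := (hν i).ne'
    have e1 : ν i * ((1/ν i) * (P i t - pst i * Real.log (P i t)))
        = P i t - pst i * Real.log (P i t) := by field_simp
    have e2 : ν i * ((1/ν i) * (pst i - pst i * Real.log (pst i)))
        = pst i - pst i * Real.log (pst i) := by field_simp
    rw [mul_add, e1, e2] at h8
    exact h8
  have hboundHn : ∀ t, (0:ℝ) ≤ t →
      H (Fin.last m) t - hnst * Real.log (H (Fin.last m) t)
        ≤ (V 0 - Vmin) + (hnst - hnst * Real.log hnst) := by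
    intro t ht
    have h1 := hdecomp t ht
    have h4 := hpieceZ t ht
    have h6 := hVle t ht
    have h7 := hsumnonneg t ht
    have h6' := h6
    rw [eq_comm] at h1
    linarith [h1, h4, h6, h7]
  have hboundZ : ∀ t, (0:ℝ) ≤ t →
      Z t - zst * Real.log (Z t)
        ≤ lam * (V 0 - Vmin) + (zst - zst * Real.log zst) := by
    intro t ht
    have h1 := hdecomp t ht
    have h3 := hpieceN t ht
    have h6 := hVle t ht
    have h7 := hsumnonneg t ht
    have hb : (1/lam) * (Z t - zst * Real.log (Z t))
        ≤ (V 0 - Vmin) + (1/lam) * (zst - zst * Real.log zst) := by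
      linarith [h1, h3, h6, h7]
    have h8 := mul_le_mul_of_nonneg_left hb hlam.le
    have hlne : lam ≠ 0 := hlam.ne'
    have e1 : lam * ((1/lam) * (Z t - zst * Real.log (Z t)))
        = Z t - zst * Real.log (Z t) := by field_simp
    have e2 : lam * ((1/lam) * (zst - zst * Real.log zst))
        = zst - zst * Real.log zst := by field_simp
    rw [mul_add, e1, e2] at h8
    exact h8
  -- bounds on logarithms
  have hBH : ∀ i : Fin m, ∃ B, ∀ t, (0:ℝ) ≤ t → |Real.log (H i.castSucc t)| ≤ B :=
    fun i => ⟨_, fun t ht =>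
      log_abs_bound_aux (he i) (hHpos i.castSucc t ht) (hboundHi i t ht)⟩
  have hBP' : ∀ i : Fin m, ∃ B, ∀ t, (0:ℝ) ≤ t → |Real.log (P i t)| ≤ B :=
    fun i => ⟨_, fun t ht =>
      log_abs_bound_aux (hpst_pos i) (hPpos i t ht) (hboundPi i t ht)⟩
  have hBHn : ∃ B, ∀ t, (0:ℝ) ≤ t → |Real.log (H (Fin.last m) t)| ≤ B :=
    ⟨_, fun t ht => log_abs_bound_aux hhnst_pos (hHpos (Fin.last m) t ht) (hboundHn t ht)⟩
  have hBZ' : ∃ B, ∀ t, (0:ℝ) ≤ t → |Real.log (Z t)| ≤ B :=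
    ⟨_, fun t ht => log_abs_bound_aux hzst_pos (hZpos t ht) (hboundZ t ht)⟩
  choose BH hBH using hBH
  choose BP hBP using hBP'
  obtain ⟨BN, hBN⟩ := hBHn
  obtain ⟨BZ, hBZ⟩ := hBZ'
  refine ⟨?_, ?_, ?_, ?_⟩
  · -- averages of H_i
    intro i
    apply avg_tendsto_aux (g := fun t => (Real.log (P i t) - Real.log (P i 0)) / ν i)
      (B := (BP i + BP i) / ν i)
    · exact fun t ht => hIP i t ht
    · intro t ht
      rw [abs_div, abs_of_pos (hν i)]
      exact (div_le_div_iff_of_pos_right (hν i)).mpr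
        ((abs_sub_le_abs_add_abs _ _).trans (add_le_add (hBP i t ht) (hBP i 0 le_rfl)))
  · -- averages of P_i
    intro i
    apply avg_tendsto_aux
      (g := fun t => (Real.log (H (Fin.last m) t) - Real.log (H (Fin.last m) 0))
        - (Real.log (H i.castSucc t) - Real.log (H i.castSucc 0)))
      (B := (BN + BN) + (BH i + BH i))
    · intro t ht
      have h1 := hIP2 i t ht
      have h2 := hIZ t ht
      linarith
    · intro t ht
      have t1 : |Real.log (H (Fin.last m) t) - Real.log (H (Fin.last m) 0)| ≤ BN + BN :=
        (abs_sub_le_abs_add_abs _ _).trans (add_le_add (hBN t ht) (hBN 0 le_rfl))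
      have t2 : |Real.log (H i.castSucc t) - Real.log (H i.castSucc 0)| ≤ BH i + BH i :=
        (abs_sub_le_abs_add_abs _ _).trans (add_le_add (hBH i t ht) (hBH i 0 le_rfl))
      exact (abs_sub_le_abs_add_abs _ _).trans (add_le_add t1 t2)
  · -- average of H_n
    apply avg_tendsto_aux
      (g := fun t => (Real.log (Z t) - Real.log (Z 0))/lam
        - ∑ i : Fin m, (Real.log (P i t) - Real.log (P i 0))/ν i)
      (B := (BZ + BZ)/lam + ∑ i : Fin m, (BP i + BP i)/ν i)
    · intro t ht
      have h1 := hsplit t ht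
      have h2 := hIHs t ht
      have h4 : (∑ i : Fin m, ∫ s in (0:ℝ)..t, H i.castSucc s)
          = (∑ i, e i) * t + ∑ i : Fin m, (Real.log (P i t) - Real.log (P i 0))/ν i := by
        rw [Finset.sum_congr rfl (fun i _ => hIP i t ht), Finset.sum_add_distrib,
          ← Finset.sum_mul]
      linarith
    · intro t ht
      have t1 : |(Real.log (Z t) - Real.log (Z 0))/lam| ≤ (BZ + BZ)/lam := by
        rw [abs_div, abs_of_pos hlam]
        exact (div_le_div_iff_of_pos_right hlam).mpr
          ((abs_sub_le_abs_add_abs _ _).trans (add_le_add (hBZ t ht) (hBZ 0 le_rfl)))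
      have t2 : |∑ i : Fin m, (Real.log (P i t) - Real.log (P i 0))/ν i|
          ≤ ∑ i : Fin m, (BP i + BP i)/ν i := by
        refine (Finset.abs_sum_le_sum_abs _ _).trans (Finset.sum_le_sum fun i _ => ?_)
        rw [abs_div, abs_of_pos (hν i)]
        exact (div_le_div_iff_of_pos_right (hν i)).mpr
          ((abs_sub_le_abs_add_abs _ _).trans (add_le_add (hBP i t ht) (hBP i 0 le_rfl)))
      exact (abs_sub_le_abs_add_abs _ _).trans (add_le_add t1 t2)
  · -- average of Z
    apply avg_tendsto_aux
      (g := fun t => -((Real.log (Z t) - Real.log (Z 0))/lam)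
        - (Real.log (H (Fin.last m) t) - Real.log (H (Fin.last m) 0)))
      (B := (BZ + BZ)/lam + (BN + BN))
    · intro t ht
      have h1 := hIZ t ht
      have h2 := hIHs t ht
      linarith
    · intro t ht
      have t1 : |-(((Real.log (Z t) - Real.log (Z 0))/lam))| ≤ (BZ + BZ)/lam := by
        rw [abs_neg, abs_div, abs_of_pos hlam]
        exact (div_le_div_iff_of_pos_right hlam).mpr
          ((abs_sub_le_abs_add_abs _ _).trans (add_le_add (hBZ t ht) (hBZ 0 le_rfl)))
      have t2 : |Real.log (H (Fin.last m) t) - Real.log (H (Fin.last m) 0)| ≤ BN + BN :=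
        (abs_sub_le_abs_add_abs _ _).trans (add_le_add (hBN t ht) (hBN 0 le_rfl))
      exact (abs_sub_le_abs_add_abs _ _).trans (add_le_add t1 t2)
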